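/- arXiv:2102.11600 — 3 statements merged into one kernel-verified Lean document; each statement's English description precedes it below -/
import Mathlib

section
/- Let L : ℝ^k → ℝ be a loss function, let A : ℝ^k → ℝ^k be an invertible linear map such that L(A x) = L(x) for every x ∈ ℝ^k, and let T_w and T_{Aw} be invertible linear operators on ℝ^k satisfying T_{Aw}⁻¹ ∘ A = T_w⁻¹. Then for every w ∈ ℝ^k, every ρ > 0 and every p with 1 ≤ p ≤ ∞, the adaptive sharpness values at w and at A w coincide: sup over {ε ∈ ℝ^k : ‖T_w⁻¹ ε‖_p ≤ ρ} of L(w + ε), minus L(w), equals sup over {ε ∈ ℝ^k : ‖T_{Aw}⁻¹ ε‖_p ≤ ρ} of L(A w + ε), minus L(A w). -/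
open scoped ENNReal BigOperators

/-- The ℓ^p norm on ℝ^k for `p : ℝ≥0∞` (the sup norm when `p = ∞`). -/
noncomputable def lpNorm {k : ℕ} (p : ℝ≥0∞) (x : Fin k → ℝ) : ℝ :=
  if p = ∞ then ⨆ i, |x i| else (∑ i, |x i| ^ p.toReal) ^ (1 / p.toReal)

theorem EquivLike.image_preimage_of_comp {G α β γ : Type*} [EquivLike G α β] (e : G)
    {f : β → γ} {g : α → γ} (h : ∀ x, f (e x) = g x) (s : Set γ) :
    e '' (g ⁻¹' s) = f ⁻¹' s := by
  ext y
  obtain ⟨x, rfl⟩ := EquivLike.surjective e y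
  simp only [(EquivLike.injective e).mem_set_image, Set.mem_preimage, h]

theorem AddHomClass.image_image_add_left_of_comp {G E F β : Type*} [Add E] [Add F]
    [FunLike G E F] [AddHomClass G E F] (A : G) {L : F → β} {L' : E → β}
    (hA : ∀ x, L (A x) = L' x) (w : E) (S : Set E) :
    (fun ε => L (A w + ε)) '' (A '' S) = (fun ε => L' (w + ε)) '' S := by
  simp only [Set.image_image, ← map_add, hA]

theorem adaptive_sharpness_scale_invariant_general {k : ℕ} (L : (Fin k → ℝ) → ℝ)
    (A Tw TAw : (Fin k → ℝ) ≃ₗ[ℝ] (Fin k → ℝ))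
    (hA : ∀ x, L (A x) = L x)
    (hT : ∀ x, TAw.symm (A x) = Tw.symm x)
    (w : Fin k → ℝ) (ρ : ℝ) (p : ℝ≥0∞) :
    sSup ((fun ε => L (w + ε)) '' {ε | lpNorm p (Tw.symm ε) ≤ ρ}) - L w =
      sSup ((fun ε => L (A w + ε)) '' {ε | lpNorm p (TAw.symm ε) ≤ ρ}) - L (A w) := by
  have hball : A '' {ε | lpNorm p (Tw.symm ε) ≤ ρ} = {ε | lpNorm p (TAw.symm ε) ≤ ρ} :=
    EquivLike.image_preimage_of_comp A hT {x | lpNorm p x ≤ ρ}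
  rw [hA w, ← hball, AddHomClass.image_image_add_left_of_comp A hA]

/-- **Theorem 1 (scale-invariance of adaptive sharpness).**
If `A` is an invertible linear map leaving the loss `L` unchanged and the invertible
linear operators `T_w`, `T_{Aw}` satisfy `T_{Aw}⁻¹ ∘ A = T_w⁻¹`, then the adaptive
sharpness values at `w` and at `A w` coincide. -/
theorem adaptive_sharpness_scale_invariant {k : ℕ} (L : (Fin k → ℝ) → ℝ)
    (A Tw TAw : (Fin k → ℝ) ≃ₗ[ℝ] (Fin k → ℝ))
    (hA : ∀ x, L (A x) = L x)
    (hT : ∀ x, TAw.symm (A x) = Tw.symm x)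
    (w : Fin k → ℝ) (ρ : ℝ) (hρ : 0 < ρ) (p : ℝ≥0∞) (hp : 1 ≤ p) :
    sSup ((fun ε => L (w + ε)) '' {ε | lpNorm p (Tw.symm ε) ≤ ρ}) - L w =
      sSup ((fun ε => L (A w + ε)) '' {ε | lpNorm p (TAw.symm ε) ≤ ρ}) - L (A w) :=
  adaptive_sharpness_scale_invariant_general L A Tw TAw hA hT w ρ p
end

section
/- Let L : ℝ^k → ℝ, let w ∈ ℝ^k have all coordinates nonzero, and let A = diag(a₁, …, a_k) with every aᵢ > 0 satisfy L(A x) = L(x) for all x ∈ ℝ^k. Then for every ρ > 0 and 1 ≤ p ≤ ∞, sup over {ε : ‖diag(|w₁|, …, |w_k|)⁻¹ ε‖_p ≤ ρ} of L(w + ε), minus L(w), equals sup over {ε : ‖diag(|a₁w₁|, …, |a_kw_k|)⁻¹ ε‖_p ≤ ρ} of L(A w + ε), minus L(A w). -/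
open scoped ENNReal BigOperators

/-!
The diagonal scaling `ε ↦ A ε` maps the ball `‖T_w⁻¹ ε‖_p ≤ ρ` onto the ball
`‖T_{Aw}⁻¹ ε‖_p ≤ ρ`, because `aᵢεᵢ / |aᵢwᵢ| = εᵢ / |wᵢ|` when `aᵢ > 0`; and
`L (A w + A ε) = L (w + ε)`. So both suprema are taken over the same set of values.
-/

open Set

lemma mul_div_abs_mul_of_pos {a : ℝ} (ha : 0 < a) (e w : ℝ) : a * e / |a * w| = e / |w| := by
  rw [abs_mul, abs_of_pos ha, mul_div_mul_left _ _ ha.ne']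

def diagScaleEquiv {ι K : Type*} [GroupWithZero K] (a : ι → K) (ha : ∀ i, a i ≠ 0) :
    (ι → K) ≃ (ι → K) :=
  Equiv.piCongrRight fun i => Equiv.mulLeft₀ (a i) (ha i)

@[simp]
lemma coe_diagScaleEquiv {ι K : Type*} [GroupWithZero K] (a : ι → K) (ha : ∀ i, a i ≠ 0) :
    ⇑(diagScaleEquiv a ha) = fun ε i => a i * ε i :=
  rfl

lemma image_mul_setOf_div_abs_mem {ι : Type*} (s : Set (ι → ℝ)) (w a : ι → ℝ)
    (ha : ∀ i, 0 < a i) :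
    (fun (ε : ι → ℝ) i => a i * ε i) '' {ε | (fun i => ε i / |w i|) ∈ s} =
      {ε | (fun i => ε i / |a i * w i|) ∈ s} := by
  have hpre : diagScaleEquiv a (fun i => (ha i).ne') ⁻¹' {ε | (fun i => ε i / |a i * w i|) ∈ s} =
      {ε | (fun i => ε i / |w i|) ∈ s} := by
    ext ε
    simp only [coe_diagScaleEquiv, mem_preimage, mem_ofPred_eq, mul_div_abs_mul_of_pos (ha _)]
  rw [← hpre, ← coe_diagScaleEquiv a fun i => (ha i).ne', Equiv.image_preimage]

theorem elementwise_adaptive_sharpness_invariant_general {k : ℕ} (L : (Fin k → ℝ) → ℝ)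
    (w : Fin k → ℝ)
    (a : Fin k → ℝ) (ha : ∀ i, 0 < a i)
    (hA : ∀ x : Fin k → ℝ, L (fun i => a i * x i) = L x)
    (ρ : ℝ) (p : ℝ≥0∞) :
    sSup ((fun ε => L (w + ε)) '' {ε | lpNorm p (fun i => ε i / |w i|) ≤ ρ}) - L w =
      sSup ((fun ε => L ((fun i => a i * w i) + ε)) ''
          {ε | lpNorm p (fun i => ε i / |a i * w i|) ≤ ρ}) -
        L (fun i => a i * w i) := by
  have hball : (fun (ε : Fin k → ℝ) i => a i * ε i) ''
        {ε | lpNorm p (fun i => ε i / |w i|) ≤ ρ} = {ε | lpNorm p (fun i => ε i / |a i * w i|) ≤ ρ} :=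
    image_mul_setOf_div_abs_mem {x | lpNorm p x ≤ ρ} w a ha
  have hloss : (fun ε => L ((fun i => a i * w i) + ε)) ∘ (fun (ε : Fin k → ℝ) i => a i * ε i) =
      fun ε => L (w + ε) := by
    funext ε
    exact (congrArg L (by ext i; simp [mul_add])).trans (hA (w + ε))
  rw [← hball, ← image_comp, hloss, hA w]

/-- Element-wise instance of Theorem 1: if the positive diagonal scaling
`A = diag(a₁, …, a_k)` leaves the loss unchanged, then adaptive sharpness with the
element-wise normalization operator `T_w = diag(|w₁|, …, |w_k|)` is the same at
`w` and at `A w`. -/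
theorem elementwise_adaptive_sharpness_invariant {k : ℕ} (L : (Fin k → ℝ) → ℝ)
    (w : Fin k → ℝ) (hw : ∀ i, w i ≠ 0)
    (a : Fin k → ℝ) (ha : ∀ i, 0 < a i)
    (hA : ∀ x : Fin k → ℝ, L (fun i => a i * x i) = L x)
    (ρ : ℝ) (hρ : 0 < ρ) (p : ℝ≥0∞) (hp : 1 ≤ p) :
    sSup ((fun ε => L (w + ε)) '' {ε | lpNorm p (fun i => ε i / |w i|) ≤ ρ}) - L w =
      sSup ((fun ε => L ((fun i => a i * w i) + ε)) ''
          {ε | lpNorm p (fun i => ε i / |a i * w i|) ≤ ρ}) -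
        L (fun i => a i * w i) :=
  elementwise_adaptive_sharpness_invariant_general L w a ha hA ρ p
end

section
/- Let L : ℝ^k → ℝ be measurable with 0 ≤ L(x) ≤ 1 for all x, let w ∈ ℝ^k, let σ > 0, and let ε = (ε₁, …, ε_k) have independent coordinates εᵢ ~ N(0, σ²). Let η > 0, let T be an invertible linear operator on ℝ^k with ‖T⁻¹ x‖₂ ≤ ‖x‖₂/η for all x, let n ≥ 1, and set ρ = √k · σ · (1 + √(log n / k)) / η. Then E[L(w + ε)] ≤ (1 − 1/√n) · sup over {ε' : ‖T⁻¹ ε'‖₂ ≤ ρ} of L(w + ε'), plus 1/√n; in particular E[L(w + ε)] ≤ sup over {ε' : ‖T⁻¹ ε'‖₂ ≤ ρ} of L(w + ε') plus 1/√n. -/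
/-!
Inside the Euclidean ball of radius `σ (√k + √(log n))` the perturbation `ε` satisfies
`‖T⁻¹ ε‖₂ ≤ ρ`, so there `L (w + ε)` is at most the supremum `S`; outside it
`L ≤ 1`. Hence `E[L(w + ε)] ≤ S + p (1 - S)` with `p` the Gaussian mass outside the ball, and a
Chernoff bound for `‖ε‖₂²`, using `E[exp (t εᵢ²)] = (1 - 2 t σ²)^(-1/2)`, gives
`p ≤ exp (-(log n) / 2) = 1 / √n`.
-/

open MeasureTheory ProbabilityTheory Real
open scoped NNReal

lemma integral_exp_mul_sq_gaussianReal {v : ℝ≥0} (hv : v ≠ 0) {c : ℝ} (hc : 2 * c * v < 1) :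
    ∫ x, exp (c * x ^ 2) ∂gaussianReal 0 v = (√(1 - 2 * c * v))⁻¹ := by
  have hv₀ : (0 : ℝ) < v := by positivity
  have hdensity : ∀ x, gaussianPDFReal 0 v x • exp (c * x ^ 2)
      = (√(2 * π * v))⁻¹ * exp (-((1 - 2 * c * v) / (2 * v)) * x ^ 2) := by
    intro x
    rw [smul_eq_mul, gaussianPDFReal, mul_assoc, ← exp_add]
    congr 2
    field_simp
    ring
  have h1 : 0 < 1 - 2 * c * v := by linarith
  rw [integral_gaussianReal_eq_integral_smul hv, funext hdensity, integral_const_mul,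
    integral_gaussian, div_div_eq_mul_div, mul_comm π, mul_right_comm,
    sqrt_div (by positivity)]
  field_simp

lemma integrable_exp_mul_sq_gaussianReal {v : ℝ≥0} (hv : v ≠ 0) {c : ℝ}
    (hc : 2 * c * v < 1) :
    Integrable (fun x => exp (c * x ^ 2)) (gaussianReal 0 v) :=
  .of_integral_ne_zero <| by
    rw [integral_exp_mul_sq_gaussianReal hv hc]
    have : 0 < 1 - 2 * c * v := by linarith
    positivity

lemma sqrt_one_add_div_sqrt_pow_le_exp (k : ℕ) {b : ℝ} (hb : 0 ≤ b) :
    √(1 + b / √k) ^ k ≤ exp (√k * b / 2) :=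
  calc √(1 + b / √k) ^ k ≤ exp (b / √k / 2) ^ k := by
        gcongr
        rw [exp_half]
        gcongr
        linarith [add_one_le_exp (b / √k)]
    _ = exp (√k * b / 2) := by
        have : (k : ℝ) * (b / √k / 2) = √k * √k / √k * b / 2 := by
          rw [mul_self_sqrt (Nat.cast_nonneg k)]
          ring
        rw [← exp_nat_mul, this, mul_self_div_self]

section
variable {ι : Type*} [Fintype ι] {v : ℝ≥0}

lemma mgf_sum_sq_pi_gaussianReal {c : ℝ} (hv : v ≠ 0) (hc : 2 * c * v < 1) :
    mgf (fun ε : ι → ℝ => ∑ i, ε i ^ 2) (Measure.pi fun _ => gaussianReal 0 v) c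
      = (√(1 - 2 * c * v))⁻¹ ^ Fintype.card ι := by
  simp only [mgf, Finset.mul_sum, exp_sum]
  rw [integral_fintype_prod_eq_pow (fun x => exp (c * x ^ 2)),
    integral_exp_mul_sq_gaussianReal hv hc]

lemma integrable_exp_mul_sum_sq_pi_gaussianReal {c : ℝ} (hv : v ≠ 0) (hc : 2 * c * v < 1) :
    Integrable (fun ε : ι → ℝ => exp (c * ∑ i, ε i ^ 2))
      (Measure.pi fun _ => gaussianReal 0 v) := by
  simp only [Finset.mul_sum, exp_sum]
  exact .fintype_prod fun _ => integrable_exp_mul_sq_gaussianReal hv hc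

lemma measureReal_pi_gaussianReal_sum_sq_ge_le [Nonempty ι] (hv : v ≠ 0) {s : ℝ}
    (hs : 0 ≤ s) :
    (Measure.pi fun _ : ι => gaussianReal 0 v).real
        {ε | v * (√(Fintype.card ι) + √s) ^ 2 ≤ ∑ i, ε i ^ 2} ≤ exp (-s / 2) := by
  set k := Fintype.card ι
  set a := √(k : ℝ)
  set b := √s
  have ha : 0 < a := sqrt_pos.mpr (by simp [k, Fintype.card_pos])
  have hb2 : b ^ 2 = s := sq_sqrt hs
  have hv₀ : (0 : ℝ) < v := by positivity
  -- This makes `1 - 2 t v = a / (a + b)`, and the threshold term `exp (-t v (a + b)²)` then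
  -- cancels the bound `exp (a b / 2)` on the mgf up to `exp (-b² / 2)`.
  set t := b / (2 * (a + b)) / v with ht_def
  have ht : 0 ≤ t := by positivity
  have h2tv : 2 * t * v = b / (a + b) := by
    rw [ht_def]
    field_simp
  have h2tv_lt : 2 * t * v < 1 := by
    rw [h2tv, div_lt_one (by positivity)]
    linarith
  have hmgf : (√(1 - 2 * t * v))⁻¹ ^ k = √(1 + b / a) ^ k := by
    rw [h2tv, one_sub_div (by positivity), add_sub_cancel_right, ← sqrt_inv, inv_div,
      add_div, div_self ha.ne']
  calc _ ≤ exp (-t * (v * (a + b) ^ 2)) * mgf (fun ε : ι → ℝ => ∑ i, ε i ^ 2)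
          (Measure.pi fun _ => gaussianReal 0 v) t :=
        measure_ge_le_exp_mul_mgf _ ht (integrable_exp_mul_sum_sq_pi_gaussianReal hv h2tv_lt)
    _ = exp (-(b * (a + b) / 2)) * √(1 + b / a) ^ k := by
        rw [mgf_sum_sq_pi_gaussianReal hv h2tv_lt, hmgf, ht_def]
        field_simp
    _ ≤ exp (-(b * (a + b) / 2)) * exp (a * b / 2) := by
        gcongr
        exact sqrt_one_add_div_sqrt_pow_le_exp k (sqrt_nonneg s)
    _ = exp (-s / 2) := by
        rw [← exp_add, ← hb2]
        ring_nf

end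

lemma integral_le_one_sub_mul_add_of_measureReal_compl_le {α : Type*} [MeasurableSpace α]
    {μ : Measure α} [IsProbabilityMeasure μ] {f : α → ℝ} (hf : AEStronglyMeasurable f μ)
    (hf0 : ∀ x, 0 ≤ f x) (hf1 : ∀ x, f x ≤ 1) {A : Set α} (hA : MeasurableSet A)
    {S δ : ℝ} (hfA : ∀ x ∈ A, f x ≤ S) (hS1 : S ≤ 1) (hδ : μ.real Aᶜ ≤ δ) :
    ∫ x, f x ∂μ ≤ (1 - δ) * S + δ := by
  have hf_int : Integrable f μ :=
    .of_bound hf 1 (.of_forall fun x => (norm_of_nonneg (hf0 x)).trans_le (hf1 x))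
  have hin : ∫ x in A, f x ∂μ ≤ μ.real A * S := by
    grw [setIntegral_mono_on hf_int.integrableOn (integrableOn_const (measure_ne_top _ _)) hA
      hfA, setIntegral_const, smul_eq_mul]
  have hout : ∫ x in Aᶜ, f x ∂μ ≤ μ.real Aᶜ := by
    grw [setIntegral_mono_on hf_int.integrableOn (integrableOn_const (measure_ne_top _ _))
      hA.compl fun x _ => hf1 x, setIntegral_const, smul_eq_mul, mul_one]
  have hδS := mul_le_mul_of_nonneg_right hδ (sub_nonneg.mpr hS1)
  rw [probReal_compl_eq_one_sub hA] at hout hδS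
  rw [← integral_add_compl hA hf_int]
  linarith

/-- Key inequality in the proof of Theorem 2 of the paper.  For a measurable loss
`L` with values in `[0, 1]`, i.i.d. Gaussian perturbation `ε ~ N(0, σ²I)`, an
invertible operator `T` with `‖T⁻¹x‖₂ ≤ ‖x‖₂/η`, `n ≥ 1` and
`ρ = √k σ (1 + √(log n / k)) / η`, the expected perturbed loss is bounded by
`(1 − 1/√n) · sup_{‖T⁻¹ε'‖₂ ≤ ρ} L(w + ε') + 1/√n`, and in particular by
`sup_{‖T⁻¹ε'‖₂ ≤ ρ} L(w + ε') + 1/√n`. -/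
theorem expected_loss_le_adaptive_sup {k : ℕ} (hk : 0 < k)
    (L : (Fin k → ℝ) → ℝ) (hLmeas : Measurable L)
    (hL0 : ∀ x, 0 ≤ L x) (hL1 : ∀ x, L x ≤ 1)
    (w : Fin k → ℝ) (σ : ℝ≥0) (hσ : 0 < σ)
    (η : ℝ) (hη : 0 < η)
    (T : (Fin k → ℝ) ≃ₗ[ℝ] (Fin k → ℝ))
    (hT : ∀ x : Fin k → ℝ,
      Real.sqrt (∑ i, (T.symm x i) ^ 2) ≤ Real.sqrt (∑ i, (x i) ^ 2) / η)
    (n : ℝ) (hn : 1 ≤ n) (ρ : ℝ)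
    (hρ : ρ = Real.sqrt k * σ * (1 + Real.sqrt (Real.log n / k)) / η) :
    (∫ ε, L (w + ε) ∂(Measure.pi fun _ : Fin k => gaussianReal 0 (σ ^ 2))) ≤
      (1 - 1 / Real.sqrt n) *
          sSup ((fun ε' => L (w + ε')) ''
            {ε' | Real.sqrt (∑ i, (T.symm ε' i) ^ 2) ≤ ρ}) +
        1 / Real.sqrt n ∧
    (∫ ε, L (w + ε) ∂(Measure.pi fun _ : Fin k => gaussianReal 0 (σ ^ 2))) ≤
      sSup ((fun ε' => L (w + ε')) ''
          {ε' | Real.sqrt (∑ i, (T.symm ε' i) ^ 2) ≤ ρ}) +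
        1 / Real.sqrt n := by
  set S := sSup ((fun ε' => L (w + ε')) '' {ε' | √(∑ i, (T.symm ε' i) ^ 2) ≤ ρ})
  have hρc : ρ = σ * (√k + √(log n)) / η := by
    rw [hρ, sqrt_div (log_nonneg hn)]
    field_simp
  have hc : 0 < σ * (√k + √(log n)) :=
    mul_pos hσ (add_pos_of_pos_of_nonneg (sqrt_pos.2 (Nat.cast_pos.2 hk)) (sqrt_nonneg _))
  set c := σ * (√k + √(log n))
  set A := {ε : Fin k → ℝ | ∑ i, ε i ^ 2 < c ^ 2}
  have hLA : ∀ ε ∈ A, L (w + ε) ≤ S := fun ε hε =>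
    le_csSup ⟨1, by rintro _ ⟨_, -, rfl⟩; exact hL1 _⟩
      ⟨ε, (hT ε).trans (by rw [hρc]; gcongr; exact ((sqrt_lt' hc).2 hε).le), rfl⟩
  have htail : (Measure.pi fun _ : Fin k => gaussianReal 0 (σ ^ 2)).real Aᶜ ≤ 1 / √n := by
    have : Nonempty (Fin k) := ⟨⟨0, hk⟩⟩
    convert measureReal_pi_gaussianReal_sum_sq_ge_le (ι := Fin k) (pow_ne_zero 2 hσ.ne')
      (log_nonneg hn) using 2
    · ext ε
      simp [A, c, mul_pow]
    · rw [neg_div, exp_neg, exp_half, exp_log (by linarith), one_div]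
  have hbound := integral_le_one_sub_mul_add_of_measureReal_compl_le
    (hLmeas.comp (measurable_const_add w)).aestronglyMeasurable (fun _ => hL0 _) (fun _ => hL1 _)
    (measurableSet_lt (by fun_prop) measurable_const) hLA
    (Real.sSup_le (by rintro _ ⟨_, -, rfl⟩; exact hL1 _) zero_le_one) htail
  have hS0 : 0 ≤ S := Real.sSup_nonneg (by rintro _ ⟨_, -, rfl⟩; exact hL0 _)
  refine ⟨hbound, hbound.trans ?_⟩
  have : 0 ≤ 1 / √n * S := by positivity
  linarith
end
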